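/- arXiv:2411.05481 — 4 statements merged into one kernel-verified Lean document; each statement's English description precedes it below -/
import Mathlib

section
/- Let Θ̃(t_{k+1}) = (I - η U(t_k) - η S) Θ̃(t_k) where U(t_k) = Φ(t_k)Φ(t_k)^T with ‖Φ(t_k)‖ ≤ 1, S is a symmetric positive semidefinite matrix of full rank (hence positive definite), and η = λ_min(S) / (λ_max(U(t_k)) + λ_max(S))². Then ‖Θ̃(t_k)‖ ≤ (√(1 - λ_min(S)²/(1 + λ_max(S))²))^k ‖Θ̃(t_0)‖, i.e., the estimation error converges to zero exponentially. -/
open Matrix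

/-- Largest eigenvalue of a hermitian real matrix. -/
noncomputable def eigMax {n : ℕ} (A : Matrix (Fin n) (Fin n) ℝ)
    (hA : A.IsHermitian) : ℝ := ⨆ i, hA.eigenvalues i

/-- Smallest eigenvalue of a hermitian real matrix. -/
noncomputable def eigMin {n : ℕ} (A : Matrix (Fin n) (Fin n) ℝ)
    (hA : A.IsHermitian) : ℝ := ⨅ i, hA.eigenvalues i

/-!
The iteration matrix `M = 1 - η (U + S)` is symmetric, so its operator norm is the largest
modulus of an eigenvalue. At a unit eigenvector `v` the eigenvalue is `1 - η μ` with
`μ = ⟪v, (U + S) v⟫ ∈ [λ_min(S), L]`, `L = λ_max(U) + λ_max(S) ≤ 1 + λ_max(S)`. For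
`η = λ_min(S) / L²` this places the eigenvalue in `[0, 1 - λ_min(S)² / L²]`, whence
`‖M‖² ≤ 1 - λ_min(S)² / L² ≤ 1 - λ_min(S)² / (1 + λ_max(S))²`.
-/

open scoped RealInnerProductSpace

namespace Matrix.IsHermitian

variable {ι : Type*} [Fintype ι] [DecidableEq ι] {A : Matrix ι ι ℝ} (hA : A.IsHermitian)

lemma toEuclideanLin_eigenvectorBasis (i : ι) :
    toEuclideanLin A (hA.eigenvectorBasis i) = hA.eigenvalues i • hA.eigenvectorBasis i := by
  ext1
  simp [toLpLin_apply, hA.mulVec_eigenvectorBasis]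

lemma inner_eigenvectorBasis_toEuclideanLin (i : ι) (x : EuclideanSpace ℝ ι) :
    ⟪hA.eigenvectorBasis i, toEuclideanLin A x⟫ =
      hA.eigenvalues i * ⟪hA.eigenvectorBasis i, x⟫ := by
  rw [← isSymmetric_toEuclideanLin_iff.2 hA, toEuclideanLin_eigenvectorBasis,
    real_inner_smul_left]

lemma eigenvalues_eq_inner (i : ι) :
    hA.eigenvalues i = ⟪hA.eigenvectorBasis i, toEuclideanLin A (hA.eigenvectorBasis i)⟫ := by
  rw [inner_eigenvectorBasis_toEuclideanLin, real_inner_self_eq_norm_sq,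
    hA.eigenvectorBasis.orthonormal.1 i, one_pow, mul_one]

lemma inner_toEuclideanLin_self (x : EuclideanSpace ℝ ι) :
    ⟪x, toEuclideanLin A x⟫ = ∑ i, hA.eigenvalues i * ⟪hA.eigenvectorBasis i, x⟫ ^ 2 := by
  rw [← hA.eigenvectorBasis.sum_inner_mul_inner]
  refine Finset.sum_congr rfl fun i _ => ?_
  rw [inner_eigenvectorBasis_toEuclideanLin, real_inner_comm]
  ring

lemma norm_toEuclideanLin_le {q : ℝ} (hq : ∀ i, hA.eigenvalues i ^ 2 ≤ q)
    (x : EuclideanSpace ℝ ι) : ‖toEuclideanLin A x‖ ≤ √q * ‖x‖ := by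
  have hsq : ‖toEuclideanLin A x‖ ^ 2 ≤ q * ‖x‖ ^ 2 := by
    rw [← hA.eigenvectorBasis.sum_sq_inner_right, ← hA.eigenvectorBasis.sum_sq_inner_right,
      Finset.mul_sum]
    refine Finset.sum_le_sum fun i _ => ?_
    rw [inner_eigenvectorBasis_toEuclideanLin, mul_pow]
    exact mul_le_mul_of_nonneg_right (hq i) (sq_nonneg _)
  rw [← Real.sqrt_sq (norm_nonneg x), ← Real.sqrt_mul' _ (sq_nonneg _)]
  exact Real.le_sqrt_of_sq_le hsq

end Matrix.IsHermitian

lemma inner_toEuclideanLin_vecMulVec_self {ι : Type*} [Fintype ι] [DecidableEq ι]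
    (v x : EuclideanSpace ℝ ι) : ⟪x, toEuclideanLin (vecMulVec v v) x⟫ = ⟪v, x⟫ ^ 2 := by
  simp only [toLpLin_apply, EuclideanSpace.inner_eq_star_dotProduct, vecMulVec_mulVec]
  simp [sq, dotProduct_comm]

section Rayleigh

variable {n : ℕ} {A : Matrix (Fin n) (Fin n) ℝ}

lemma eigMin_mul_norm_sq_le_inner (hA : A.IsHermitian) (x : EuclideanSpace ℝ (Fin n)) :
    eigMin A hA * ‖x‖ ^ 2 ≤ ⟪x, toEuclideanLin A x⟫ := by
  rw [hA.inner_toEuclideanLin_self, ← hA.eigenvectorBasis.sum_sq_inner_right, Finset.mul_sum]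
  exact Finset.sum_le_sum fun i _ =>
    mul_le_mul_of_nonneg_right (ciInf_le (Finite.bddBelow_range _) i) (sq_nonneg _)

lemma inner_le_eigMax_mul_norm_sq (hA : A.IsHermitian) (x : EuclideanSpace ℝ (Fin n)) :
    ⟪x, toEuclideanLin A x⟫ ≤ eigMax A hA * ‖x‖ ^ 2 := by
  rw [hA.inner_toEuclideanLin_self, ← hA.eigenvectorBasis.sum_sq_inner_right, Finset.mul_sum]
  exact Finset.sum_le_sum fun i _ =>
    mul_le_mul_of_nonneg_right (le_ciSup (Finite.bddAbove_range _) i) (sq_nonneg _)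

lemma eigMin_nonneg (hA : A.PosSemidef) : 0 ≤ eigMin A hA.1 :=
  Real.iInf_nonneg hA.eigenvalues_nonneg

end Rayleigh

lemma eigMax_vecMulVec_self_le_one {n : ℕ} {v : EuclideanSpace ℝ (Fin n)} (hv : ‖v‖ ≤ 1)
    (h : (vecMulVec v v).IsHermitian) : eigMax (vecMulVec v v) h ≤ 1 := by
  refine Real.iSup_le (fun i => ?_) zero_le_one
  rw [h.eigenvalues_eq_inner, inner_toEuclideanLin_vecMulVec_self, sq_le_one_iff_abs_le_one]
  calc |⟪v, h.eigenvectorBasis i⟫| ≤ ‖v‖ * ‖h.eigenvectorBasis i‖ := abs_real_inner_le_norm _ _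
    _ ≤ 1 := by rw [h.eigenvectorBasis.orthonormal.1 i, mul_one]; exact hv

lemma sq_one_sub_div_sq_mul_le {m μ L K : ℝ} (hm : 0 ≤ m) (hmμ : m ≤ μ) (hμL : μ ≤ L)
    (hLK : L ≤ K) : (1 - m / L ^ 2 * μ) ^ 2 ≤ 1 - m ^ 2 / K ^ 2 := by
  rcases (hm.trans (hmμ.trans hμL)).eq_or_lt with hL | hL
  · obtain rfl : m = 0 := by linarith
    simp
  have hlo : m ^ 2 / L ^ 2 ≤ m / L ^ 2 * μ := by
    rw [div_mul_eq_mul_div, sq m]; gcongr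
  have hhi : m / L ^ 2 * μ ≤ 1 :=
    calc m / L ^ 2 * μ ≤ m / L ^ 2 * L := by gcongr
      _ = m / L := by field_simp
      _ ≤ 1 := (div_le_one hL).2 (hmμ.trans hμL)
  have hK : m ^ 2 / K ^ 2 ≤ m ^ 2 / L ^ 2 := by gcongr
  calc (1 - m / L ^ 2 * μ) ^ 2 ≤ (1 - m ^ 2 / L ^ 2) ^ 2 := by gcongr
    _ ≤ 1 - m ^ 2 / L ^ 2 := by nlinarith [div_nonneg (sq_nonneg m) (sq_nonneg L)]
    _ ≤ 1 - m ^ 2 / K ^ 2 := by linarith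

lemma norm_toEuclideanLin_one_sub_smul_sub_smul_le {n : ℕ} {U S : Matrix (Fin n) (Fin n) ℝ}
    (hU : U.PosSemidef) (hU1 : eigMax U hU.1 ≤ 1) (hS : S.PosSemidef) {η : ℝ}
    (hη : η = eigMin S hS.1 / (eigMax U hU.1 + eigMax S hS.1) ^ 2)
    (x : EuclideanSpace ℝ (Fin n)) :
    ‖toEuclideanLin (1 - η • U - η • S) x‖ ≤
      √(1 - eigMin S hS.1 ^ 2 / (1 + eigMax S hS.1) ^ 2) * ‖x‖ := by
  have hM : (1 - η • U - η • S).IsHermitian :=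
    (isHermitian_one.sub (hU.1.smul (.all η))).sub (hS.1.smul (.all η))
  refine hM.norm_toEuclideanLin_le (fun i => ?_) x
  have hμ := hM.eigenvalues_eq_inner i
  set v := hM.eigenvectorBasis i
  have hv : ‖v‖ = 1 := hM.eigenvectorBasis.orthonormal.1 i
  simp only [map_sub, map_smul, LinearMap.sub_apply, LinearMap.smul_apply, inner_sub_right,
    real_inner_smul_right, toLpLin_one, LinearMap.id_apply, real_inner_self_eq_norm_sq, hv,
    one_pow] at hμ
  replace hμ :
      hM.eigenvalues i = 1 - η * (⟪v, toEuclideanLin U v⟫ + ⟪v, toEuclideanLin S v⟫) := by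
    rw [hμ]; ring
  have hU0 := eigMin_mul_norm_sq_le_inner hU.1 v
  have hUle := inner_le_eigMax_mul_norm_sq hU.1 v
  have hS0 := eigMin_mul_norm_sq_le_inner hS.1 v
  have hSle := inner_le_eigMax_mul_norm_sq hS.1 v
  rw [hv, one_pow, mul_one] at hU0 hUle hS0 hSle
  rw [hμ, hη]
  exact sq_one_sub_div_sq_mul_le (eigMin_nonneg hS)
    (by linarith [eigMin_nonneg hU]) (by linarith) (by linarith)

theorem stmt0_general {n : ℕ}
    (Φ : ℕ → EuclideanSpace ℝ (Fin n)) (hΦ : ∀ k, ‖Φ k‖ ≤ 1)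
    (U : ℕ → Matrix (Fin n) (Fin n) ℝ)
    (hUdef : ∀ k, U k = vecMulVec (Φ k) (Φ k))
    (hU : ∀ k, (U k).IsHermitian)
    (S : Matrix (Fin n) (Fin n) ℝ) (hS : S.PosSemidef)
    (η : ℕ → ℝ)
    (hη : ∀ k, η k = eigMin S hS.1 / (eigMax (U k) (hU k) + eigMax S hS.1) ^ 2)
    (Θ : ℕ → EuclideanSpace ℝ (Fin n))
    (hrec : ∀ k, Θ (k + 1) = Matrix.toEuclideanLin (1 - η k • U k - η k • S) (Θ k)) :
    ∀ k, ‖Θ k‖ ≤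
      (Real.sqrt (1 - eigMin S hS.1 ^ 2 / (1 + eigMax S hS.1) ^ 2)) ^ k * ‖Θ 0‖ := by
  have hUpsd : ∀ k, (U k).PosSemidef := fun k => by
    simpa [hUdef k] using posSemidef_vecMulVec_self_star (Φ k).ofLp
  have hU1 : ∀ k, eigMax (U k) (hU k) ≤ 1 := fun k => by
    simp only [hUdef k]
    exact eigMax_vecMulVec_self_le_one (hΦ k) _
  refine fun k => le_geom (u := fun k => ‖Θ k‖) (Real.sqrt_nonneg _) k fun j _ => ?_
  rw [hrec j]
  exact norm_toEuclideanLin_one_sub_smul_sub_smul_le (hUpsd j) (hU1 j) hS (hη j) (Θ j)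

/-- exponential convergence of the concurrent-learning estimator. With
`Θ̃(k+1) = (I − ηU(k) − ηS) Θ̃(k)`, `U(k) = Φ(k)Φ(k)ᵀ`, `‖Φ(k)‖ ≤ 1`, `S` symmetric
PSD of full rank (hence positive definite), and
`η = λ_min(S) / (λ_max(U(k)) + λ_max(S))²`, one has
`‖Θ̃(k)‖ ≤ (√(1 − λ_min(S)² / (1 + λ_max(S))²))ᵏ ‖Θ̃(0)‖`. -/
theorem stmt0 {n : ℕ}
    (Φ : ℕ → EuclideanSpace ℝ (Fin n)) (hΦ : ∀ k, ‖Φ k‖ ≤ 1)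
    (U : ℕ → Matrix (Fin n) (Fin n) ℝ)
    (hUdef : ∀ k, U k = vecMulVec (Φ k) (Φ k))
    (hU : ∀ k, (U k).IsHermitian)
    (S : Matrix (Fin n) (Fin n) ℝ) (hS : S.PosSemidef) (hrank : S.rank = n)
    (η : ℕ → ℝ)
    (hη : ∀ k, η k = eigMin S hS.1 / (eigMax (U k) (hU k) + eigMax S hS.1) ^ 2)
    (Θ : ℕ → EuclideanSpace ℝ (Fin n))
    (hrec : ∀ k, Θ (k + 1) = Matrix.toEuclideanLin (1 - η k • U k - η k • S) (Θ k)) :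
    ∀ k, ‖Θ k‖ ≤
      (Real.sqrt (1 - eigMin S hS.1 ^ 2 / (1 + eigMax S hS.1) ^ 2)) ^ k * ‖Θ 0‖ :=
  stmt0_general Φ hΦ U hUdef hU S hS η hη Θ hrec
end

section
/- Let matrices A(k) = I − ηU(k) − ηS with U(k), S symmetric PSD, S positive definite, ‖Φ(k)‖ ≤ 1 so λ_max(U(k)) ≤ 1, and η = λ_min(S)/(λ_max(U(k)) + λ_max(S))². Then the spectral norm of A(k) is at most √(1 − λ_min(S)²/(1 + λ_max(S))²) < 1. -/
/-!
Write `m = λ_min(S)` and `L = λ_max(U) + λ_max(S)`. The quadratic form of `U + S` lies between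
`m‖x‖²` and `L‖x‖²`, so that of `A = 1 - η(U + S)` lies between `(1 - ηL)‖x‖² ≥ 0` and
`(1 - ηm)‖x‖²`. The norm of a symmetric operator is the supremum of its Rayleigh quotient, hence
`‖A‖ ≤ 1 - ηm = 1 - m²/L²`. As `λ_max(U) ≤ ‖Φ‖² ≤ 1`, this is at most `1 - m²/(1 + λ_max(S))²`,
a number in `[0, 1)` and therefore bounded by its square root.
-/

open Matrix

open scoped RealInnerProductSpace

namespace ContinuousLinearMap

variable {E : Type*} [NormedAddCommGroup E] [InnerProductSpace ℝ E]

theorem norm_le_of_abs_inner_self_le {T : E →L[ℝ] E} (hT : (T : E →ₗ[ℝ] E).IsSymmetric)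
    {c : ℝ} (hc : 0 ≤ c) (h : ∀ x, |⟪x, T x⟫| ≤ c * ‖x‖ ^ 2) : ‖T‖ ≤ c := by
  rw [T.norm_eq_iSup_rayleighQuotient hT]
  refine Real.iSup_le (fun x ↦ ?_) hc
  rw [rayleighQuotient, reApplyInnerSelf_apply, RCLike.re_to_real, real_inner_comm, abs_div,
    abs_sq]
  exact div_le_of_le_mul₀ (sq_nonneg _) hc (h x)

theorem norm_one_sub_smul_le {T : E →L[ℝ] E} (hT : (T : E →ₗ[ℝ] E).IsSymmetric)
    {m L η : ℝ} (hmL : m ≤ L) (hη : 0 ≤ η) (hηL : η * L ≤ 1)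
    (hlo : ∀ x, m * ‖x‖ ^ 2 ≤ ⟪x, T x⟫) (hhi : ∀ x, ⟪x, T x⟫ ≤ L * ‖x‖ ^ 2) :
    ‖1 - η • T‖ ≤ 1 - η * m := by
  have hsymm : ((1 - η • T : E →L[ℝ] E) : E →ₗ[ℝ] E).IsSymmetric :=
    LinearMap.IsSymmetric.one.sub (hT.smul (conj_trivial η))
  refine norm_le_of_abs_inner_self_le hsymm (by nlinarith) fun x ↦ ?_
  have hx : ⟪x, (1 - η • T) x⟫ = ‖x‖ ^ 2 - η * ⟪x, T x⟫ := by
    simp [inner_sub_right, real_inner_smul_right]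
  have hq_lo := mul_le_mul_of_nonneg_left (hlo x) hη
  have hq_hi := mul_le_mul_of_nonneg_left (hhi x) hη
  rw [hx, abs_le]
  constructor <;> nlinarith [sq_nonneg ‖x‖, mul_nonneg hη (sq_nonneg ‖x‖)]

theorem norm_one_sub_div_sq_smul_le {T : E →L[ℝ] E} (hT : (T : E →ₗ[ℝ] E).IsSymmetric)
    {m L : ℝ} (hm : 0 < m) (hmL : m ≤ L)
    (hlo : ∀ x, m * ‖x‖ ^ 2 ≤ ⟪x, T x⟫) (hhi : ∀ x, ⟪x, T x⟫ ≤ L * ‖x‖ ^ 2) :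
    ‖1 - (m / L ^ 2) • T‖ ≤ 1 - m ^ 2 / L ^ 2 := by
  have hL : 0 < L := hm.trans_le hmL
  have hηL : m / L ^ 2 * L ≤ 1 := by
    rw [sq, ← div_div, div_mul_cancel₀ _ hL.ne']
    exact div_le_one_of_le₀ hmL hL.le
  simpa [div_mul_eq_mul_div, sq] using
    norm_one_sub_smul_le hT hmL (by positivity) hηL hlo hhi

end ContinuousLinearMap

namespace Matrix.IsHermitian

variable {n : ℕ} {M : Matrix (Fin n) (Fin n) ℝ}

theorem eigMin_le (hM : M.IsHermitian) (i : Fin n) : eigMin M hM ≤ hM.eigenvalues i :=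
  ciInf_le (Set.finite_range _).bddBelow i

theorem le_eigMax (hM : M.IsHermitian) (i : Fin n) : hM.eigenvalues i ≤ eigMax M hM :=
  le_ciSup (Set.finite_range _).bddAbove i

theorem inner_eigenvectorBasis_toEuclideanCLM (hM : M.IsHermitian) (i : Fin n)
    (x : EuclideanSpace ℝ (Fin n)) :
    ⟪hM.eigenvectorBasis i, toEuclideanCLM (𝕜 := ℝ) M x⟫
      = hM.eigenvalues i * ⟪hM.eigenvectorBasis i, x⟫ := by
  have hv : toEuclideanCLM (𝕜 := ℝ) M (hM.eigenvectorBasis i)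
      = hM.eigenvalues i • hM.eigenvectorBasis i :=
    (WithLp.ofLp_injective 2).eq_iff.mp (by simp [hM.mulVec_eigenvectorBasis])
  calc ⟪hM.eigenvectorBasis i, toEuclideanCLM (𝕜 := ℝ) M x⟫
      = ⟪toEuclideanCLM (𝕜 := ℝ) M (hM.eigenvectorBasis i), x⟫ :=
        (isSymmetric_toEuclideanLin_iff.mpr hM _ x).symm
    _ = hM.eigenvalues i * ⟪hM.eigenvectorBasis i, x⟫ := by rw [hv, real_inner_smul_left]

theorem inner_toEuclideanCLM_self (hM : M.IsHermitian) (x : EuclideanSpace ℝ (Fin n)) :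
    ⟪x, toEuclideanCLM (𝕜 := ℝ) M x⟫ = ∑ i, hM.eigenvalues i * ⟪hM.eigenvectorBasis i, x⟫ ^ 2 := by
  rw [← hM.eigenvectorBasis.sum_inner_mul_inner]
  refine Finset.sum_congr rfl fun i _ ↦ ?_
  rw [inner_eigenvectorBasis_toEuclideanCLM, real_inner_comm]
  ring

theorem eigMin_mul_norm_sq_le (hM : M.IsHermitian) (x : EuclideanSpace ℝ (Fin n)) :
    eigMin M hM * ‖x‖ ^ 2 ≤ ⟪x, toEuclideanCLM (𝕜 := ℝ) M x⟫ := by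
  rw [inner_toEuclideanCLM_self, ← hM.eigenvectorBasis.sum_sq_inner_right, Finset.mul_sum]
  gcongr with i
  exact hM.eigMin_le i

theorem inner_le_eigMax_mul_norm_sq (hM : M.IsHermitian) (x : EuclideanSpace ℝ (Fin n)) :
    ⟪x, toEuclideanCLM (𝕜 := ℝ) M x⟫ ≤ eigMax M hM * ‖x‖ ^ 2 := by
  rw [inner_toEuclideanCLM_self, ← hM.eigenvectorBasis.sum_sq_inner_right, Finset.mul_sum]
  gcongr with i
  exact hM.le_eigMax i

theorem eigMax_le_of_inner_le (hM : M.IsHermitian) {c : ℝ} (hc : 0 ≤ c)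
    (h : ∀ x, ⟪x, toEuclideanCLM (𝕜 := ℝ) M x⟫ ≤ c * ‖x‖ ^ 2) : eigMax M hM ≤ c := by
  refine Real.iSup_le (fun i ↦ ?_) hc
  simpa [inner_eigenvectorBasis_toEuclideanCLM, hM.eigenvectorBasis.orthonormal.1 i]
    using h (hM.eigenvectorBasis i)

theorem eigMax_le_norm_sq_of_eq_vecMulVec (hM : M.IsHermitian) {v : EuclideanSpace ℝ (Fin n)}
    (hv : M = vecMulVec v v) : eigMax M hM ≤ ‖v‖ ^ 2 := by
  refine hM.eigMax_le_of_inner_le (sq_nonneg _) fun x ↦ ?_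
  have hx : ⟪x, toEuclideanCLM (𝕜 := ℝ) M x⟫ = ⟪v, x⟫ ^ 2 := by
    simp [hv, vecMulVec_mulVec, EuclideanSpace.inner_eq_star_dotProduct,
      dotProduct_comm, sq]
  rw [hx, ← mul_pow, ← sq_abs]
  exact pow_le_pow_left₀ (abs_nonneg _) (abs_real_inner_le_norm v x) 2

end Matrix.IsHermitian

theorem Matrix.PosSemidef.inner_toEuclideanCLM_self_nonneg {n : ℕ}
    {M : Matrix (Fin n) (Fin n) ℝ} (hM : M.PosSemidef) (x : EuclideanSpace ℝ (Fin n)) :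
    0 ≤ ⟪x, toEuclideanCLM (𝕜 := ℝ) M x⟫ := by
  simpa [inner_toEuclideanCLM] using hM.dotProduct_mulVec_nonneg x

theorem Matrix.PosDef.eigMin_pos {n : ℕ} [NeZero n] {M : Matrix (Fin n) (Fin n) ℝ}
    (hM : M.PosDef) : 0 < eigMin M hM.1 := by
  obtain ⟨i, hi⟩ := exists_eq_ciInf_of_finite (f := hM.1.eigenvalues)
  rw [eigMin, ← hi]
  exact hM.eigenvalues_pos i

theorem Matrix.norm_toEuclideanCLM_one_sub_smul_add_le {n : ℕ} [NeZero n]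
    {P Q : Matrix (Fin n) (Fin n) ℝ} (hP : P.PosSemidef) (hQ : Q.IsHermitian)
    (hm : 0 < eigMin Q hQ) :
    ‖toEuclideanCLM (n := Fin n) (𝕜 := ℝ)
        (1 - (eigMin Q hQ / (eigMax P hP.1 + eigMax Q hQ) ^ 2) • (P + Q))‖
      ≤ 1 - eigMin Q hQ ^ 2 / (eigMax P hP.1 + eigMax Q hQ) ^ 2 := by
  have hP₀ : 0 ≤ eigMax P hP.1 := Real.iSup_nonneg hP.eigenvalues_nonneg
  have hQ₀ : eigMin Q hQ ≤ eigMax Q hQ := (hQ.eigMin_le 0).trans (hQ.le_eigMax 0)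
  rw [map_sub, map_one, map_smul]
  refine ContinuousLinearMap.norm_one_sub_div_sq_smul_le
    (isSymmetric_toEuclideanLin_iff.mpr (hP.1.add hQ)) hm (by linarith)
    (fun x ↦ ?_) (fun x ↦ ?_) <;>
  simp only [map_add, _root_.add_apply, inner_add_right]
  · linarith [hP.inner_toEuclideanCLM_self_nonneg x, hQ.eigMin_mul_norm_sq_le x]
  · linarith [hP.1.inner_le_eigMax_mul_norm_sq x, hQ.inner_le_eigMax_mul_norm_sq x]

theorem one_sub_sq_div_sq_le_sqrt {m L M : ℝ} (hL : 0 < L) (hLM : L ≤ M) :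
    1 - m ^ 2 / L ^ 2 ≤ √(1 - m ^ 2 / M ^ 2) := by
  have hmono : m ^ 2 / M ^ 2 ≤ m ^ 2 / L ^ 2 := by gcongr
  have hle : 1 - m ^ 2 / M ^ 2 ≤ 1 := sub_le_self _ (by positivity)
  linarith [Real.le_sqrt_self_iff.2 hle]

theorem sqrt_one_sub_sq_div_sq_lt_one {m M : ℝ} (hm : m ≠ 0) (hM : M ≠ 0) :
    √(1 - m ^ 2 / M ^ 2) < 1 := by
  rw [Real.sqrt_lt' one_pos]
  have : 0 < m ^ 2 / M ^ 2 := by positivity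
  linarith

/-- contraction of the error-transition matrix. With
`A(k) = I − ηU(k) − ηS`, `U(k) = Φ(k)Φ(k)ᵀ`, `‖Φ(k)‖ ≤ 1` (so `λ_max(U(k)) ≤ 1`),
`S` positive definite, and `η = λ_min(S)/(λ_max(U(k)) + λ_max(S))²`, the spectral
norm of `A(k)` is at most `√(1 − λ_min(S)²/(1 + λ_max(S))²) < 1`. -/
theorem stmt8 {n : ℕ} (hn : 0 < n)
    (Φ : ℕ → EuclideanSpace ℝ (Fin n)) (hΦ : ∀ k, ‖Φ k‖ ≤ 1)
    (U : ℕ → Matrix (Fin n) (Fin n) ℝ)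
    (hUdef : ∀ k, U k = vecMulVec (Φ k) (Φ k))
    (hU : ∀ k, (U k).PosSemidef)
    (S : Matrix (Fin n) (Fin n) ℝ) (hS : S.PosDef)
    (η : ℕ → ℝ)
    (hη : ∀ k, η k = eigMin S hS.1 / (eigMax (U k) (hU k).1 + eigMax S hS.1) ^ 2)
    (A : ℕ → Matrix (Fin n) (Fin n) ℝ)
    (hA : ∀ k, A k = 1 - η k • U k - η k • S) :
    ∀ k, ‖Matrix.toEuclideanCLM (𝕜 := ℝ) (A k)‖ ≤
        Real.sqrt (1 - eigMin S hS.1 ^ 2 / (1 + eigMax S hS.1) ^ 2) ∧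
      Real.sqrt (1 - eigMin S hS.1 ^ 2 / (1 + eigMax S hS.1) ^ 2) < 1 := by
  intro k
  have : NeZero n := ⟨hn.ne'⟩
  have hm : 0 < eigMin S hS.1 := hS.eigMin_pos
  have hmS : eigMin S hS.1 ≤ eigMax S hS.1 := (hS.1.eigMin_le 0).trans (hS.1.le_eigMax 0)
  have hU₀ : 0 ≤ eigMax (U k) (hU k).1 := Real.iSup_nonneg (hU k).eigenvalues_nonneg
  have hU₁ : eigMax (U k) (hU k).1 ≤ 1 :=
    ((hU k).1.eigMax_le_norm_sq_of_eq_vecMulVec (hUdef k)).trans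
      (pow_le_one₀ (norm_nonneg _) (hΦ k))
  have hcontr := Matrix.norm_toEuclideanCLM_one_sub_smul_add_le (hU k) hS.1 hm
  rw [smul_add, ← sub_sub, ← hη k, ← hA k] at hcontr
  exact ⟨hcontr.trans (one_sub_sq_div_sq_le_sqrt (by linarith) (by linarith)),
    sqrt_one_sub_sq_div_sq_lt_one hm.ne' (by linarith)⟩
end

section
/- Linear regression form of the ranging equation: under the substitutions p_{ij}(t_k) = p_{ij}(t₀) + p_i(t_k) − R p_j(t_k) and u_{ij}(t_k) = u_i(t_k) − R u_j(t_k), the cosine-law identity u_{ij}(t_k)^T p_{ij}(t_k) = ½(d(t_{k+1})² − d(t_k)² − ‖u_{ij}(t_k)‖²) is equivalent to a relation linear in the unknown parameter vector Θ = (p_{ij}(t₀), R^T(p_{i,h}(t₀) − p_{j,h}(t₀)), cos θ₀, sin θ₀): namely y(t_k) = Θ^T Φ(t_k) for measurable y(t_k) and regressor Φ(t_k). -/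
/-!
Because `R` is orthogonal, expanding the cosine law leaves `‖u_j‖²` and `u_jᵀ p_j` free of the
yaw, and `(R u_j)ᵀ p_{ij}(t₀) = u_jᵀ Rᵀ p_{ij}(t₀)` is linear in the unknowns. What remains are
three cross terms `xᵀ R z`; for a rotation about the vertical axis each equals
`cos θ₀ (x_h ⬝ z_h) + sin θ₀ (x_h × z_h) + x_z z_z`, and together they give `cos θ₀ a + sin θ₀ b`
plus measurable vertical products.
-/

open Matrix Real

section Orthogonal

variable {K n : Type*} [Fintype n]

lemma mulVec_dotProduct_mulVec_of_transpose_mul_self [CommSemiring K] [DecidableEq n]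
    {R : Matrix n n K} (hR : Rᵀ * R = 1) (x z : n → K) : (R *ᵥ x) ⬝ᵥ (R *ᵥ z) = x ⬝ᵥ z := by
  rw [dotProduct_mulVec, ← mulVec_transpose, mulVec_mulVec, hR, one_mulVec]

theorem ranging_equation_iff_of_transpose_mul_self [Field K] [CharZero K] [DecidableEq n]
    {R : Matrix n n K} (hR : Rᵀ * R = 1) (p₀ pᵢ pⱼ uᵢ uⱼ : n → K) (D : K) :
    (uᵢ - R *ᵥ uⱼ) ⬝ᵥ (p₀ + pᵢ - R *ᵥ pⱼ) = (1 / 2) * (D - (uᵢ - R *ᵥ uⱼ) ⬝ᵥ (uᵢ - R *ᵥ uⱼ)) ↔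
      (1 / 2) * (D - uᵢ ⬝ᵥ uᵢ - uⱼ ⬝ᵥ uⱼ) - uᵢ ⬝ᵥ pᵢ - uⱼ ⬝ᵥ pⱼ
        = uᵢ ⬝ᵥ p₀ - uⱼ ⬝ᵥ (Rᵀ *ᵥ p₀)
          - (uᵢ ⬝ᵥ (R *ᵥ pⱼ) + pᵢ ⬝ᵥ (R *ᵥ uⱼ) + uᵢ ⬝ᵥ (R *ᵥ uⱼ)) := by
  rw [dotProduct_transpose_mulVec]
  simp only [dotProduct_add, dotProduct_sub, sub_dotProduct,
    mulVec_dotProduct_mulVec_of_transpose_mul_self hR, dotProduct_comm (R *ᵥ uⱼ)]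
  constructor <;> intro h <;> linear_combination -h

end Orthogonal

noncomputable def planarRotation (θ : ℝ) : Matrix (Fin 2) (Fin 2) ℝ :=
  !![cos θ, -sin θ; sin θ, cos θ]

noncomputable def yawRotation (θ : ℝ) : Matrix (Fin 3) (Fin 3) ℝ :=
  !![cos θ, -sin θ, 0; sin θ, cos θ, 0; 0, 0, 1]

lemma yawRotation_transpose_mul_self (θ : ℝ) : (yawRotation θ)ᵀ * yawRotation θ = 1 := by
  have h := sin_sq_add_cos_sq θ
  ext i j
  fin_cases i <;> fin_cases j <;>
    simp [yawRotation, Matrix.mul_apply, Fin.sum_univ_three] <;> linarith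

lemma dotProduct_yawRotation_mulVec (θ : ℝ) (x z : Fin 3 → ℝ) :
    x ⬝ᵥ (yawRotation θ *ᵥ z)
      = cos θ * (x 0 * z 0 + x 1 * z 1) + sin θ * (z 0 * x 1 - z 1 * x 0) + x 2 * z 2 := by
  simp only [yawRotation, mulVec, vec3_dotProduct, of_apply, cons_val', cons_val_zero, cons_val_one,
    cons_val_two, tail_cons, head_cons]
  ring

lemma yawRotation_transpose_mulVec (θ : ℝ) (p : Fin 3 → ℝ) :
    (yawRotation θ)ᵀ *ᵥ p = ![((planarRotation θ)ᵀ *ᵥ ![p 0, p 1]) 0,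
      ((planarRotation θ)ᵀ *ᵥ ![p 0, p 1]) 1, p 2] := by
  ext i
  fin_cases i <;> simp [yawRotation, planarRotation, mulVec, dotProduct, Fin.sum_univ_three]

theorem stmt14_general (θ₀ : ℝ)
    (R2 : Matrix (Fin 2) (Fin 2) ℝ)
    (hR2 : R2 = !![Real.cos θ₀, -Real.sin θ₀; Real.sin θ₀, Real.cos θ₀])
    (R3 : Matrix (Fin 3) (Fin 3) ℝ)
    (hR3 : R3 = !![Real.cos θ₀, -Real.sin θ₀, 0; Real.sin θ₀, Real.cos θ₀, 0; 0, 0, 1])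
    (p0 : Fin 3 → ℝ)
    (pi pj pij : ℕ → Fin 3 → ℝ)
    (hpij : ∀ k, pij k = p0 + pi k - R3.mulVec (pj k))
    (ui uj uij : ℕ → Fin 3 → ℝ)
    (huij : ∀ k, uij k = ui k - R3.mulVec (uj k))
    (d : ℕ → ℝ)  -- the measured inter-robot distances
    (a b : ℕ → ℝ)
    (ha : ∀ k, a k = (ui k 0 * pj k 0 + ui k 1 * pj k 1)
      + (pi k 0 * uj k 0 + pi k 1 * uj k 1)
      + (ui k 0 * uj k 0 + ui k 1 * uj k 1))
    (hb : ∀ k, b k = (pj k 0 * ui k 1 - pj k 1 * ui k 0)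
      + (uj k 0 * pi k 1 - uj k 1 * pi k 0)
      + (uj k 0 * ui k 1 - uj k 1 * ui k 0))
    (Φ : ℕ → Fin 7 → ℝ)
    (hΦ : ∀ k, Φ k = ![ui k 0, ui k 1, ui k 2 - uj k 2,
      -(uj k 0), -(uj k 1), -(a k), -(b k)])
    (Θ : Fin 7 → ℝ)
    (hΘ : Θ = ![p0 0, p0 1, p0 2,
      (R2ᵀ.mulVec ![p0 0, p0 1]) 0, (R2ᵀ.mulVec ![p0 0, p0 1]) 1,
      Real.cos θ₀, Real.sin θ₀])
    (y : ℕ → ℝ)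
    (hy : ∀ k, y k = (1 / 2) * (d (k + 1) ^ 2 - d k ^ 2
        - ui k ⬝ᵥ ui k - uj k ⬝ᵥ uj k)
      - ui k ⬝ᵥ pi k - uj k ⬝ᵥ pj k
      + ui k 2 * pj k 2 + pi k 2 * uj k 2 + ui k 2 * uj k 2) :
    ∀ k, (uij k ⬝ᵥ pij k
        = (1 / 2) * (d (k + 1) ^ 2 - d k ^ 2 - uij k ⬝ᵥ uij k))
      ↔ y k = Θ ⬝ᵥ Φ k := by
  intro k
  obtain rfl : R2 = planarRotation θ₀ := hR2
  obtain rfl : R3 = yawRotation θ₀ := hR3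
  have hcross : ui k ⬝ᵥ (yawRotation θ₀ *ᵥ pj k) + pi k ⬝ᵥ (yawRotation θ₀ *ᵥ uj k)
        + ui k ⬝ᵥ (yawRotation θ₀ *ᵥ uj k)
      = cos θ₀ * a k + sin θ₀ * b k + (ui k 2 * pj k 2 + pi k 2 * uj k 2 + ui k 2 * uj k 2) := by
    simp only [dotProduct_yawRotation_mulVec, ha, hb]
    ring
  have hregression : Θ ⬝ᵥ Φ k
      = ui k ⬝ᵥ p0 - uj k ⬝ᵥ ((yawRotation θ₀)ᵀ *ᵥ p0) - (cos θ₀ * a k + sin θ₀ * b k) := by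
    rw [hΘ, hΦ, yawRotation_transpose_mulVec]
    simp only [cons_dotProduct_cons, dotProduct_of_isEmpty, vec3_dotProduct, cons_val_zero,
      cons_val_one, cons_val_two, tail_cons, head_cons]
    ring
  rw [hpij, huij, ranging_equation_iff_of_transpose_mul_self (yawRotation_transpose_mul_self θ₀),
    hy, hregression, hcross]
  constructor <;> intro h <;> linarith

/-- linear-regression form of the ranging equation. Under the
substitutions `p_{ij}(t_k) = p_{ij}(t₀) + p_i(t_k) − R p_j(t_k)` and
`u_{ij}(t_k) = u_i(t_k) − R u_j(t_k)` (with `R` the rotation by the unknown initial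
relative yaw `θ₀`, acting on horizontal components), the cosine-law identity
`u_{ij}(t_k)ᵀ p_{ij}(t_k) = ½(d(t_{k+1})² − d(t_k)² − ‖u_{ij}(t_k)‖²)` is equivalent
to the relation `y(t_k) = Θᵀ Φ(t_k)`, which is linear in the unknown parameter
vector `Θ = (p_{ij}(t₀), Rᵀ p_{ij,h}(t₀), cos θ₀, sin θ₀)`, where `y(t_k)` and the
regressor `Φ(t_k)` are built only from measurable quantities
(`d`, `p_i`, `p_j`, `u_i`, `u_j`). -/
theorem stmt14 (θ₀ : ℝ)
    (R2 : Matrix (Fin 2) (Fin 2) ℝ)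
    (hR2 : R2 = !![Real.cos θ₀, -Real.sin θ₀; Real.sin θ₀, Real.cos θ₀])
    (R3 : Matrix (Fin 3) (Fin 3) ℝ)
    (hR3 : R3 = !![Real.cos θ₀, -Real.sin θ₀, 0; Real.sin θ₀, Real.cos θ₀, 0; 0, 0, 1])
    (p0 : Fin 3 → ℝ)
    (pi pj pij : ℕ → Fin 3 → ℝ)
    (hpij : ∀ k, pij k = p0 + pi k - R3.mulVec (pj k))
    (ui uj uij : ℕ → Fin 3 → ℝ)
    (hui : ∀ k, ui k = pi (k + 1) - pi k)
    (huj : ∀ k, uj k = pj (k + 1) - pj k)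
    (huij : ∀ k, uij k = ui k - R3.mulVec (uj k))
    (d : ℕ → ℝ)  -- the measured inter-robot distances
    (a b : ℕ → ℝ)
    (ha : ∀ k, a k = (ui k 0 * pj k 0 + ui k 1 * pj k 1)
      + (pi k 0 * uj k 0 + pi k 1 * uj k 1)
      + (ui k 0 * uj k 0 + ui k 1 * uj k 1))
    (hb : ∀ k, b k = (pj k 0 * ui k 1 - pj k 1 * ui k 0)
      + (uj k 0 * pi k 1 - uj k 1 * pi k 0)
      + (uj k 0 * ui k 1 - uj k 1 * ui k 0))
    (Φ : ℕ → Fin 7 → ℝ)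
    (hΦ : ∀ k, Φ k = ![ui k 0, ui k 1, ui k 2 - uj k 2,
      -(uj k 0), -(uj k 1), -(a k), -(b k)])
    (Θ : Fin 7 → ℝ)
    (hΘ : Θ = ![p0 0, p0 1, p0 2,
      (R2ᵀ.mulVec ![p0 0, p0 1]) 0, (R2ᵀ.mulVec ![p0 0, p0 1]) 1,
      Real.cos θ₀, Real.sin θ₀])
    (y : ℕ → ℝ)
    (hy : ∀ k, y k = (1 / 2) * (d (k + 1) ^ 2 - d k ^ 2
        - ui k ⬝ᵥ ui k - uj k ⬝ᵥ uj k)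
      - ui k ⬝ᵥ pi k - uj k ⬝ᵥ pj k
      + ui k 2 * pj k 2 + pi k 2 * uj k 2 + ui k 2 * uj k 2) :
    ∀ k, (uij k ⬝ᵥ pij k
        = (1 / 2) * (d (k + 1) ^ 2 - d k ^ 2 - uij k ⬝ᵥ uij k))
      ↔ y k = Θ ⬝ᵥ Φ k :=
  stmt14_general θ₀ R2 hR2 R3 hR3 p0 pi pj pij hpij ui uj uij huij d a b ha hb Φ hΦ Θ hΘ y hy
end

section
/- If the velocities of both robots are constant over all sampling times (u_i(t_k) = u_i and u_j(t_k) = u_j for all k), then the first three rows of every regressor Φ_{ij}(t_k) are the same fixed vector, so the top-left 3×3 block of the Gram matrix S_{ij} has rank at most 1, hence S_{ij} is not full rank and the relative position is unobservable. -/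
/-!
Along the whole trajectory the first three coordinates of the regressor are one fixed vector `w`,
so the corresponding principal `3 × 3` block of the Gram matrix is `m • w wᵀ`, of rank at most one.
The Gram matrix is positive semidefinite, and a positive semidefinite matrix with a singular
principal block cannot be positive definite, hence is singular.
-/

open Matrix
open scoped ComplexOrder

namespace Matrix

theorem submatrix_sum_vecMulVec_self_of_comp_eq {ι m n R : Type*} [CommSemiring R]
    (s : Finset ι) (Φ : ι → n → R) (e : m → n) (w : m → R) (hΦ : ∀ k ∈ s, Φ k ∘ e = w) :
    (∑ k ∈ s, vecMulVec (Φ k) (Φ k)).submatrix e e = vecMulVec ((s.card : R) • w) w := by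
  ext i j
  have hentry : ∀ k ∈ s, Φ k (e i) * Φ k (e j) = w i * w j := fun k hk => by
    rw [← hΦ k hk]; rfl
  simp only [submatrix_apply, sum_apply, vecMulVec_apply, Pi.smul_apply, smul_eq_mul]
  rw [Finset.sum_congr rfl hentry, Finset.sum_const, nsmul_eq_mul, mul_assoc]

theorem posSemidef_sum_vecMulVec_self {ι n : Type*} [Fintype n] (s : Finset ι)
    (Φ : ι → n → ℝ) : (∑ k ∈ s, vecMulVec (Φ k) (Φ k)).PosSemidef :=
  posSemidef_sum s fun k _ => by simpa using posSemidef_vecMulVec_self_star (Φ k)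

theorem PosSemidef.det_eq_zero_of_rank_submatrix_lt {𝕜 m n : Type*} [RCLike 𝕜] [Fintype m]
    [DecidableEq m] [Fintype n] [DecidableEq n] {S : Matrix n n 𝕜} (hS : S.PosSemidef)
    {e : m → n} (he : Function.Injective e)
    (hrank : (S.submatrix e e).rank < Fintype.card m) : S.det = 0 := by
  by_contra hdet
  have hblock : (S.submatrix e e).PosDef := ((hS.posDef_iff_det_ne_zero).mpr hdet).submatrix he
  exact hrank.ne (rank_of_isUnit _ hblock.isUnit)

end Matrix

/-- if the velocities of both robots are constant
(`uᵢ(t_k) = uᵢ`, `uⱼ(t_k) = uⱼ` for all `k`), then the first three components of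
every regressor `Φᵢⱼ(t_k)` form the same fixed vector, so the top-left `3×3` block
of the Gram matrix `S = ∑ₖ Φₖ Φₖᵀ` has rank at most `1`; hence `S` is not full rank
(the relative position is unobservable). -/
theorem stmt15 {m : ℕ} (ui uj : ℕ → Fin 3 → ℝ) (uic ujc : Fin 3 → ℝ)
    (hui : ∀ k, ui k = uic) (huj : ∀ k, uj k = ujc)
    (Φ : ℕ → Fin 7 → ℝ)
    (hΦ : ∀ k, Φ k 0 = ui k 0 ∧ Φ k 1 = ui k 1 ∧ Φ k 2 = ui k 2 - uj k 2)
    (S : Matrix (Fin 7) (Fin 7) ℝ)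
    (hS : S = ∑ k ∈ Finset.range m, vecMulVec (Φ k) (Φ k)) :
    (S.submatrix (Fin.castLE (by norm_num : (3:ℕ) ≤ 7))
        (Fin.castLE (by norm_num : (3:ℕ) ≤ 7))).rank ≤ 1 ∧ S.det = 0 := by
  set e : Fin 3 → Fin 7 := Fin.castLE (by norm_num)
  have hhead : ∀ k ∈ Finset.range m, Φ k ∘ e = ![uic 0, uic 1, uic 2 - ujc 2] := by
    intro k _
    obtain ⟨h0, h1, h2⟩ := hΦ k
    ext i
    fin_cases i <;> simp [e, h0, h1, h2, hui, huj]
  have hrank : (S.submatrix e e).rank ≤ 1 := by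
    rw [hS, submatrix_sum_vecMulVec_self_of_comp_eq _ _ _ _ hhead]
    exact rank_vecMulVec_le _ _
  refine ⟨hrank, ?_⟩
  have hgram : S.PosSemidef := hS ▸ posSemidef_sum_vecMulVec_self _ Φ
  exact hgram.det_eq_zero_of_rank_submatrix_lt (e := e) (Fin.castLE_injective _)
    (by rw [Fintype.card_fin]; omega)
end
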